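/- Let 𝔥 ⊆ sp(V,ω) be the Lie subalgebra of elements preserving both V1 and V2. Then every Lie subalgebra 𝔤 of sp(V,ω) that contains 𝔥 satisfies 𝔤 = 𝔥 or 𝔤 = sp(V,ω). In other words, 𝔥 is a maximal Lie subalgebra of sp(V,ω). -/

import Mathlib

/-!
Put `T u w := ω.symProd u w = ω u (·) • w + ω w (·) • u`. These span `sp(V, ω)`, since
`2 f = ∑ᵢ T (f bᵢ) dᵢ` for `ω`-dual bases `b, d`, and `⁅A, T u w⁆ = T (A u) w + T u (A w)` for
`A ∈ sp(V, ω)`. If `f ∈ 𝔤` moves some `y ∈ V2` out of `V2`, write `f y = a + b` with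
`0 ≠ a ∈ V1`, `b ∈ V2`: then `⁅f, T y y⁆ = 2 T (f y) y` puts `T a y` in `𝔤`. As `𝔥` acts
transitively on the nonzero vectors of each `Vi`, bracketing with `𝔥` gives every `T u w` with
`u ∈ V1`, `w ∈ V2`, and these together with `𝔥` span `sp(V, ω)`.
-/

attribute [local instance 100] LieRing.ofAssociativeRing

namespace LinearMap.BilinForm

variable {K V : Type*} [Field K] [AddCommGroup V] [Module K V] (ω : LinearMap.BilinForm K V)

/-- The image of `u w ∈ Sym² V` under the isomorphism `Sym² V ≃ sp(V, ω)`. -/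
noncomputable def symProd (u w : V) : Module.End K V :=
  (ω u).smulRight w + (ω w).smulRight u

variable {ω}

@[simp]
lemma symProd_apply (u w z : V) : ω.symProd u w z = ω u z • w + ω w z • u := rfl

lemma symProd_comm (u w : V) : ω.symProd u w = ω.symProd w u := add_comm _ _

lemma symProd_add_left (u u' w : V) :
    ω.symProd (u + u') w = ω.symProd u w + ω.symProd u' w := by
  ext z
  simp only [symProd_apply, map_add, LinearMap.add_apply, add_smul, smul_add]
  abel

lemma symProd_add_right (u w w' : V) :
    ω.symProd u (w + w') = ω.symProd u w + ω.symProd u w' := by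
  simp only [symProd_comm u, symProd_add_left]

@[simp]
lemma symProd_zero_left (w : V) : ω.symProd 0 w = 0 := by ext; simp

@[simp]
lemma symProd_zero_right (u : V) : ω.symProd u 0 = 0 := by ext; simp

lemma symProd_apply_mem {W : Submodule K V} {u w : V} (hu : u ∈ W) (hw : w ∈ W) (z : V) :
    ω.symProd u w z ∈ W :=
  W.add_mem (W.smul_mem _ hw) (W.smul_mem _ hu)

lemma mem_skewAdjointLieSubalgebra_iff {f : Module.End K V} :
    f ∈ skewAdjointLieSubalgebra ω ↔ ∀ x y, ω (f x) y = -ω x (f y) := by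
  change f ∈ ω.skewAdjointSubmodule ↔ _
  simp [mem_skewAdjointSubmodule, IsSkewAdjoint, IsAdjointPair]

lemma symProd_mem_skewAdjointLieSubalgebra (hAlt : ω.IsAlt) (u w : V) :
    ω.symProd u w ∈ skewAdjointLieSubalgebra ω := by
  rw [mem_skewAdjointLieSubalgebra_iff]
  intro x y
  simp only [symProd_apply, map_add, map_smul, LinearMap.add_apply, LinearMap.smul_apply,
    smul_eq_mul]
  rw [← hAlt.neg_eq w x, ← hAlt.neg_eq u x]
  ring

lemma lie_symProd {A : Module.End K V} (hA : A ∈ skewAdjointLieSubalgebra ω) (u w : V) :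
    ⁅A, ω.symProd u w⁆ = ω.symProd (A u) w + ω.symProd u (A w) := by
  rw [mem_skewAdjointLieSubalgebra_iff] at hA
  ext z
  simp only [LieRing.of_associative_ring_bracket, LinearMap.sub_apply, Module.End.mul_apply,
    LinearMap.add_apply, symProd_apply, map_add, map_smul, hA]
  module

lemma two_smul_eq_sum_symProd {ι : Type*} [Fintype ι] [DecidableEq ι] (hAlt : ω.IsAlt)
    (hNd : ω.Nondegenerate) (b : Module.Basis ι K V) {f : Module.End K V}
    (hf : f ∈ skewAdjointLieSubalgebra ω) :
    (2 : K) • f = ∑ i, ω.symProd (f (b i)) (ω.dualBasis hNd b i) := by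
  rw [mem_skewAdjointLieSubalgebra_iff] at hf
  set d := ω.dualBasis hNd b
  have hb : ∀ z i, ω (d i) z = b.repr z i := by
    intro z i
    conv_lhs => rw [← b.sum_repr z]
    simp only [map_sum, map_smul, d, apply_dualBasis_left, smul_eq_mul, mul_ite, mul_one,
      mul_zero, Finset.sum_ite_eq', Finset.mem_univ, if_true]
  ext z
  have hd : f z = ∑ i, ω (f (b i)) z • d i := by
    conv_lhs => rw [← d.sum_repr (f z)]
    refine Finset.sum_congr rfl fun i _ => ?_
    rw [dualBasis_repr_apply, hf, ← hAlt.neg_eq, neg_neg]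
  have hb' : f z = ∑ i, ω (d i) z • f (b i) := by
    conv_lhs => rw [← b.sum_repr z]
    simp only [map_sum, map_smul, hb]
  calc ((2 : K) • f) z = f z + f z := two_smul K (f z)
    _ = ∑ i, (ω (f (b i)) z • d i + ω (d i) z • f (b i)) := by
      rw [Finset.sum_add_distrib, ← hd, ← hb']
    _ = (∑ i, ω.symProd (f (b i)) (d i)) z := by simp

lemma skewAdjointLieSubalgebra_le_of_forall_symProd_mem [FiniteDimensional K V]
    [NeZero (2 : K)] (hAlt : ω.IsAlt) (hNd : ω.Nondegenerate)
    {g : LieSubalgebra K (Module.End K V)} (hg : ∀ u w, ω.symProd u w ∈ g) :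
    skewAdjointLieSubalgebra ω ≤ g := by
  intro f hf
  have h2f : (2 : K) • f ∈ g := two_smul_eq_sum_symProd hAlt hNd (Module.finBasis K V) hf ▸
    g.sum_mem fun i _ => hg _ _
  simpa [smul_smul, inv_mul_cancel₀ (two_ne_zero' K)] using g.smul_mem (2 : K)⁻¹ h2f

section Block

variable {W W' : Submodule K V} {g : LieSubalgebra K (Module.End K V)}

lemma exists_mem_skewAdjointLieSubalgebra_apply_eq [NeZero (2 : K)] (hAlt : ω.IsAlt)
    (hW : (ω.restrict W).Nondegenerate) (horth : ∀ x ∈ W, ∀ y ∈ W', ω x y = 0)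
    {a u : V} (ha : a ∈ W) (ha0 : a ≠ 0) (hu : u ∈ W) :
    ∃ A ∈ skewAdjointLieSubalgebra ω,
      (∀ x ∈ W, A x ∈ W) ∧ (∀ x ∈ W', A x = 0) ∧ A a = u := by
  obtain ⟨b, hb, hba⟩ : ∃ b ∈ W, ω b a ≠ 0 := by
    by_contra! h
    exact ha0 (congrArg Subtype.val (hW.2 ⟨a, ha⟩ fun n => h n n.2))
  set c := ω b a
  -- `T b u a = c • u + ω u a • b` and `T b b a = 2 c • b`.
  refine ⟨c⁻¹ • ω.symProd b u - (c⁻¹ ^ 2 * ω u a / 2) • ω.symProd b b,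
    sub_mem (Submodule.smul_mem _ _ (symProd_mem_skewAdjointLieSubalgebra hAlt b u))
      (Submodule.smul_mem _ _ (symProd_mem_skewAdjointLieSubalgebra hAlt b b)),
    fun x _ => W.sub_mem (W.smul_mem _ (symProd_apply_mem hb hu x))
      (W.smul_mem _ (symProd_apply_mem hb hb x)),
    fun x hx => by simp [horth b hb x hx, horth u hu x hx], ?_⟩
  simp only [LinearMap.sub_apply, LinearMap.smul_apply, symProd_apply]
  match_scalars <;> field_simp <;> ring

lemma symProd_mem_of_mem_of_mem (hAlt : ω.IsAlt) (horth : ∀ x ∈ W, ∀ y ∈ W', ω x y = 0)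
    (hg : ∀ f ∈ skewAdjointLieSubalgebra ω, (∀ x ∈ W, f x ∈ W) → (∀ x ∈ W', f x ∈ W') → f ∈ g)
    {u w : V} (hu : u ∈ W') (hw : w ∈ W') : ω.symProd u w ∈ g :=
  hg _ (symProd_mem_skewAdjointLieSubalgebra hAlt u w)
    (fun x hx => by
      simp [hAlt.isRefl _ _ (horth x hx u hu), hAlt.isRefl _ _ (horth x hx w hw)])
    (fun x _ => symProd_apply_mem hu hw x)

lemma symProd_mem_of_symProd_mem [NeZero (2 : K)] (hAlt : ω.IsAlt)
    (hW : (ω.restrict W).Nondegenerate) (hW' : (ω.restrict W').Nondegenerate)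
    (horth : ∀ x ∈ W, ∀ y ∈ W', ω x y = 0)
    (hg : ∀ f ∈ skewAdjointLieSubalgebra ω, (∀ x ∈ W, f x ∈ W) → (∀ x ∈ W', f x ∈ W') → f ∈ g)
    {a y : V} (ha : a ∈ W) (ha0 : a ≠ 0) (hy : y ∈ W') (hy0 : y ≠ 0)
    (hay : ω.symProd a y ∈ g)
    {u w : V} (hu : u ∈ W) (hw : w ∈ W') : ω.symProd u w ∈ g := by
  have horth' : ∀ x ∈ W', ∀ y ∈ W, ω x y = 0 :=
    fun x hx y hy => hAlt.isRefl _ _ (horth y hy x hx)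
  obtain ⟨A, hA, hAW, hAW', rfl⟩ :=
    exists_mem_skewAdjointLieSubalgebra_apply_eq hAlt hW horth ha ha0 hu
  have huy : ω.symProd (A a) y ∈ g := by
    have := g.lie_mem (hg A hA hAW fun x hx => by simp [hAW' x hx]) hay
    rwa [lie_symProd hA, hAW' y hy, symProd_zero_right, add_zero] at this
  obtain ⟨B, hB, hBW', hBW, rfl⟩ :=
    exists_mem_skewAdjointLieSubalgebra_apply_eq hAlt hW' horth' hy hy0 hw
  have := g.lie_mem (hg B hB (fun x hx => by simp [hBW x hx]) hBW') huy
  rwa [lie_symProd hB, hBW _ (hAW a ha), symProd_zero_left, zero_add] at this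

lemma exists_symProd_mem_of_apply_notMem [NeZero (2 : K)] (hAlt : ω.IsAlt)
    (hcompl : IsCompl W W') (horth : ∀ x ∈ W, ∀ y ∈ W', ω x y = 0)
    (hg : ∀ f ∈ skewAdjointLieSubalgebra ω, (∀ x ∈ W, f x ∈ W) → (∀ x ∈ W', f x ∈ W') → f ∈ g)
    {f : Module.End K V} (hf : f ∈ g) (hfω : f ∈ skewAdjointLieSubalgebra ω)
    {y : V} (hy : y ∈ W') (hfy : f y ∉ W') : ∃ a ∈ W, a ≠ 0 ∧ ω.symProd a y ∈ g := by
  obtain ⟨a, b, ha, hb, hab⟩ :=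
    Submodule.codisjoint_iff_exists_add_eq.1 hcompl.codisjoint (f y)
  refine ⟨a, ha, ?_, ?_⟩
  · rintro rfl
    rw [zero_add] at hab
    exact hfy (hab ▸ hb)
  have h2 : (2 : K) • ω.symProd a y = ⁅f, ω.symProd y y⁆ - (2 : K) • ω.symProd b y := by
    rw [lie_symProd hfω, symProd_comm y, ← two_smul K, ← hab, symProd_add_left]
    module
  have : (2 : K) • ω.symProd a y ∈ g := h2 ▸ g.sub_mem
    (g.lie_mem hf (symProd_mem_of_mem_of_mem hAlt horth hg hy hy))
    (g.smul_mem 2 (symProd_mem_of_mem_of_mem hAlt horth hg hb hy))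
  simpa [smul_smul, inv_mul_cancel₀ (two_ne_zero' K)] using g.smul_mem (2 : K)⁻¹ this

lemma symProd_mem_of_apply_notMem [NeZero (2 : K)] (hAlt : ω.IsAlt) (hcompl : IsCompl W W')
    (horth : ∀ x ∈ W, ∀ y ∈ W', ω x y = 0)
    (hW : (ω.restrict W).Nondegenerate) (hW' : (ω.restrict W').Nondegenerate)
    (hg : ∀ f ∈ skewAdjointLieSubalgebra ω, (∀ x ∈ W, f x ∈ W) → (∀ x ∈ W', f x ∈ W') → f ∈ g)
    {f : Module.End K V} (hf : f ∈ g) (hfω : f ∈ skewAdjointLieSubalgebra ω)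
    {y : V} (hy : y ∈ W') (hfy : f y ∉ W') {u w : V} (hu : u ∈ W) (hw : w ∈ W') :
    ω.symProd u w ∈ g := by
  obtain ⟨a, ha, ha0, hay⟩ :=
    exists_symProd_mem_of_apply_notMem hAlt hcompl horth hg hf hfω hy hfy
  have hy0 : y ≠ 0 := by
    rintro rfl
    simp at hfy
  exact symProd_mem_of_symProd_mem hAlt hW hW' horth hg ha ha0 hy hy0 hay hu hw

lemma symProd_mem_of_isCompl (hcompl : IsCompl W W')
    (hWW : ∀ u ∈ W, ∀ w ∈ W, ω.symProd u w ∈ g)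
    (hW'W' : ∀ u ∈ W', ∀ w ∈ W', ω.symProd u w ∈ g)
    (hWW' : ∀ u ∈ W, ∀ w ∈ W', ω.symProd u w ∈ g) (u w : V) : ω.symProd u w ∈ g := by
  have hsum := Submodule.codisjoint_iff_exists_add_eq.1 hcompl.codisjoint
  obtain ⟨u₁, u₂, hu₁, hu₂, rfl⟩ := hsum u
  obtain ⟨w₁, w₂, hw₁, hw₂, rfl⟩ := hsum w
  rw [symProd_add_left, symProd_add_right, symProd_add_right]
  refine g.add_mem (g.add_mem (hWW _ hu₁ _ hw₁) (hWW' _ hu₁ _ hw₂))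
    (g.add_mem ?_ (hW'W' _ hu₂ _ hw₂))
  rw [symProd_comm]
  exact hWW' _ hw₁ _ hu₂

end Block

end LinearMap.BilinForm

open LinearMap.BilinForm

theorem block_diagonal_subalgebra_is_maximal_in_sp_general
    {K : Type*} [Field K] [CharZero K]
    {V : Type*} [AddCommGroup V] [Module K V] [FiniteDimensional K V]
    (ω : LinearMap.BilinForm K V) (hAlt : ω.IsAlt) (hNd : ω.Nondegenerate)
    (V1 V2 : Submodule K V) (hcompl : IsCompl V1 V2)
    (horth : ∀ x ∈ V1, ∀ y ∈ V2, ω x y = 0)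
    (hNd1 : (ω.restrict V1).Nondegenerate) (hNd2 : (ω.restrict V2).Nondegenerate) :
    ∀ g : LieSubalgebra K (Module.End K V),
      -- `g` is a Lie subalgebra of `sp(V,ω)`:
      g ≤ skewAdjointLieSubalgebra ω →
      -- `g` contains `𝔥`:
      (∀ f ∈ skewAdjointLieSubalgebra ω,
        (∀ x ∈ V1, f x ∈ V1) → (∀ x ∈ V2, f x ∈ V2) → f ∈ g) →
      -- conclusion: `g = 𝔥` or `g = sp(V,ω)`:
      ((∀ f, f ∈ g ↔ f ∈ skewAdjointLieSubalgebra ω ∧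
            (∀ x ∈ V1, f x ∈ V1) ∧ (∀ x ∈ V2, f x ∈ V2)) ∨
       g = skewAdjointLieSubalgebra ω) := by
  intro g hle hg
  by_cases hblock : ∀ f ∈ g, (∀ x ∈ V1, f x ∈ V1) ∧ (∀ x ∈ V2, f x ∈ V2)
  · exact Or.inl fun f => ⟨fun hf => ⟨hle hf, hblock f hf⟩, fun ⟨hf, h₁, h₂⟩ => hg f hf h₁ h₂⟩
  push Not at hblock
  obtain ⟨f, hf, hf₁₂⟩ := hblock
  have horth' : ∀ x ∈ V2, ∀ y ∈ V1, ω x y = 0 :=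
    fun x hx y hy => hAlt.isRefl _ _ (horth y hy x hx)
  have hg' : ∀ f ∈ skewAdjointLieSubalgebra ω,
      (∀ x ∈ V2, f x ∈ V2) → (∀ x ∈ V1, f x ∈ V1) → f ∈ g :=
    fun f hf h₂ h₁ => hg f hf h₁ h₂
  have hmixed : ∀ u ∈ V1, ∀ w ∈ V2, ω.symProd u w ∈ g := by
    by_cases hf₁ : ∀ x ∈ V1, f x ∈ V1
    · obtain ⟨y, hy, hfy⟩ := hf₁₂ hf₁
      exact fun u hu w hw =>
        symProd_mem_of_apply_notMem hAlt hcompl horth hNd1 hNd2 hg hf (hle hf) hy hfy hu hw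
    · push Not at hf₁
      obtain ⟨x, hx, hfx⟩ := hf₁
      intro u hu w hw
      rw [symProd_comm]
      exact symProd_mem_of_apply_notMem hAlt hcompl.symm horth' hNd2 hNd1 hg' hf (hle hf) hx hfx
        hw hu
  refine Or.inr (le_antisymm hle (skewAdjointLieSubalgebra_le_of_forall_symProd_mem hAlt hNd ?_))
  exact symProd_mem_of_isCompl hcompl
    (fun _ hu _ hw => symProd_mem_of_mem_of_mem hAlt horth' hg' hu hw)
    (fun _ hu _ hw => symProd_mem_of_mem_of_mem hAlt horth hg hu hw) hmixed

theorem block_diagonal_subalgebra_is_maximal_in_sp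
    {K : Type*} [Field K] [CharZero K]
    {V : Type*} [AddCommGroup V] [Module K V] [FiniteDimensional K V]
    (ω : LinearMap.BilinForm K V) (hAlt : ω.IsAlt) (hNd : ω.Nondegenerate)
    (V1 V2 : Submodule K V) (h1 : V1 ≠ ⊥) (h2 : V2 ≠ ⊥) (hcompl : IsCompl V1 V2)
    (horth : ∀ x ∈ V1, ∀ y ∈ V2, ω x y = 0)
    (hNd1 : (ω.restrict V1).Nondegenerate) (hNd2 : (ω.restrict V2).Nondegenerate) :
    ∀ g : LieSubalgebra K (Module.End K V),
      -- `g` is a Lie subalgebra of `sp(V,ω)`: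
      g ≤ skewAdjointLieSubalgebra ω →
      -- `g` contains `𝔥`:
      (∀ f ∈ skewAdjointLieSubalgebra ω,
        (∀ x ∈ V1, f x ∈ V1) → (∀ x ∈ V2, f x ∈ V2) → f ∈ g) →
      -- conclusion: `g = 𝔥` or `g = sp(V,ω)`:
      ((∀ f, f ∈ g ↔ f ∈ skewAdjointLieSubalgebra ω ∧
            (∀ x ∈ V1, f x ∈ V1) ∧ (∀ x ∈ V2, f x ∈ V2)) ∨
       g = skewAdjointLieSubalgebra ω) :=
  block_diagonal_subalgebra_is_maximal_in_sp_general ω hAlt hNd V1 V2 hcompl horth hNd1 hNd2
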